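/- Let d ≥ 2, let μ = m·e_1 ∈ ℝ^d with m > 0, let η > 0 and σ ≥ 0, and let (w_t)_{t≥1} in ℝ^d satisfy the population dynamic w_{t+1} = (1 + η σ²) w_t + η ⟨w_t, μ⟩ μ for all t ≥ 1. Write a_t = ⟨w_t, μ⟩, b_t = √(Σ_{i=2}^d w_t[i]²), and r_t = a_t/b_t. Suppose a_1 > 0 and b_1 > 0. Then (i) r_{t+1} = r_1 (1 + η m²/(1 + η σ²))^t for all t ≥ 1, and (ii) for every ε ∈ (0,1), if t − 1 ≥ (1/2)·log(m²/(ε r_1²))/log(1 + η m²/(1 + η σ²)), then ⟨w_t, μ⟩ > 0 and ⟨w_t, μ⟩²/(‖w_t‖² m²) ≥ 1 − ε; i.e., w_t is an ε-optimal predictor. -/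

import Mathlib

open scoped RealInnerProductSpace

/-!
Along `μ = m e₀` the dynamic multiplies the coordinate `a_t = ⟪w_t, μ⟫` by `1 + ησ² + ηm²`, while
every coordinate orthogonal to `μ` — hence also their norm `b_t` — is multiplied by `1 + ησ²`.
So `a_t` and `b_t` are geometric, and `r_t = a_t / b_t` grows geometrically with ratio
`q = 1 + ηm²/(1 + ησ²) > 1`. Since `cos²(w_t, μ) = a_t² / (a_t² + m² b_t²)`, the predictor is
`ε`-optimal as soon as `r_t² ≥ m²/ε`, which the bound on `t` guarantees.
-/

open Finset

theorem eq_pow_mul_of_succ_eq_mul {M : Type*} [Monoid M] {u : ℕ → M} {q : M}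
    (h : ∀ t ≥ 1, u (t + 1) = q * u t) (n : ℕ) : u (n + 1) = q ^ n * u 1 := by
  induction n with
  | zero => simp
  | succ n ih => rw [h (n + 1) (by omega), ih, pow_succ', mul_assoc]

theorem le_pow_of_log_div_log_le {x q : ℝ} {n : ℕ} (hx : 0 < x) (hq : 1 < q)
    (h : Real.log x / Real.log q ≤ n) : x ≤ q ^ n := by
  rw [div_le_iff₀ (Real.log_pos hq), ← Real.log_pow] at h
  exact (Real.log_le_log_iff hx (by positivity)).mp h

theorem le_mul_mul_pow_sq_of_half_log_div_log_le {K ε r q : ℝ} {n : ℕ} (hK : 0 < K) (hε : 0 < ε)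
    (hr : 0 < r) (hq : 1 < q) (h : 1 / 2 * Real.log (K / (ε * r ^ 2)) / Real.log q ≤ n) :
    K ≤ ε * (r * q ^ n) ^ 2 := by
  have hpow : K / (ε * r ^ 2) ≤ q ^ (2 * n) := by
    refine le_pow_of_log_div_log_le (by positivity) hq ?_
    rw [mul_div_assoc] at h
    push_cast
    linarith
  rw [div_le_iff₀ (by positivity)] at hpow
  rw [mul_pow, ← pow_mul, mul_comm n 2]
  linarith

theorem one_sub_le_sq_div_sq_add {a b m ε : ℝ} (hb : 0 < b) (hm : 0 < m) (hε : 0 ≤ ε)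
    (h : m ^ 2 ≤ ε * (a / b) ^ 2) : 1 - ε ≤ a ^ 2 / (a ^ 2 + m ^ 2 * b ^ 2) := by
  have hmb : m ^ 2 * b ^ 2 ≤ ε * a ^ 2 := by
    rwa [div_pow, mul_div_assoc', le_div_iff₀ (by positivity)] at h
  rw [le_div_iff₀ (by positivity)]
  nlinarith [mul_nonneg hε (by positivity : 0 ≤ m ^ 2 * b ^ 2)]

theorem inner_smul_add_inner_smul {E : Type*} [NormedAddCommGroup E] [InnerProductSpace ℝ E]
    (c η : ℝ) (w μ : E) :
    ⟪c • w + (η * ⟪w, μ⟫) • μ, μ⟫ = (c + η * ‖μ‖ ^ 2) * ⟪w, μ⟫ := by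
  rw [inner_add_left, real_inner_smul_left, real_inner_smul_left, real_inner_self_eq_norm_sq]
  ring

namespace EuclideanSpace

variable {ι : Type*} [Fintype ι] [DecidableEq ι]

theorem real_norm_sq_mul_sq_eq_inner_single_sq_add (v : EuclideanSpace ℝ ι) (z : ι) (m : ℝ) :
    ‖v‖ ^ 2 * m ^ 2 = ⟪v, single z m⟫ ^ 2 + m ^ 2 * ∑ i ∈ univ.filter (· ≠ z), v i ^ 2 := by
  rw [real_norm_sq_eq, filter_ne', ← add_sum_erase _ _ (mem_univ z), inner_single_right]
  simp only [conj_trivial]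
  ring

theorem sum_ne_sq_smul_add_smul_single (c s m : ℝ) (v : EuclideanSpace ℝ ι) (z : ι) :
    ∑ i ∈ univ.filter (· ≠ z), ((c • v + s • single z m) i) ^ 2 =
      c ^ 2 * ∑ i ∈ univ.filter (· ≠ z), v i ^ 2 := by
  rw [mul_sum]
  refine sum_congr rfl fun i hi => ?_
  simp [(mem_filter.mp hi).2, mul_pow]

end EuclideanSpace

/-- GD with conjugate labels under square loss (population dynamic
w_{t+1} = (1 + η σ²) w_t + η ⟨w_t, μ⟩ μ) has the ratio r_t = a_t/b_t growing as
r_{t+1} = r_1 (1 + η m²/(1 + η σ²))^t, and after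
t − 1 ≥ (1/2)·log(m²/(ε r_1²))/log(1 + η m²/(1 + η σ²)) iterations, w_t is an
ε-optimal predictor. -/
theorem stmt_5 (d : ℕ) (hd : 2 ≤ d) (m η σ : ℝ) (hm : 0 < m) (hη : 0 < η)
    (μ : EuclideanSpace ℝ (Fin d))
    (hμ : μ = EuclideanSpace.single (⟨0, by omega⟩ : Fin d) m)
    (w : ℕ → EuclideanSpace ℝ (Fin d))
    (hrec : ∀ t ≥ 1,
      w (t + 1) = (1 + η * σ ^ 2) • w t + (η * ⟪w t, μ⟫) • μ)
    (a b r : ℕ → ℝ)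
    (ha : ∀ t, a t = ⟪w t, μ⟫)
    (hb : ∀ t, b t = Real.sqrt
      (∑ i ∈ Finset.univ.filter (fun i : Fin d => i ≠ ⟨0, by omega⟩), (w t i) ^ 2))
    (hr : ∀ t, r t = a t / b t)
    (ha1 : a 1 > 0) (hb1 : b 1 > 0) :
    (∀ t ≥ 1, r (t + 1) = r 1 * (1 + η * m ^ 2 / (1 + η * σ ^ 2)) ^ t) ∧
    (∀ ε : ℝ, 0 < ε → ε < 1 → ∀ t : ℕ, 1 ≤ t →
      (t : ℝ) - 1 ≥
        (1 / 2) * Real.log (m ^ 2 / (ε * (r 1) ^ 2)) /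
          Real.log (1 + η * m ^ 2 / (1 + η * σ ^ 2)) →
      ⟪w t, μ⟫ > 0 ∧ ⟪w t, μ⟫ ^ 2 / (‖w t‖ ^ 2 * m ^ 2) ≥ 1 - ε) := by
  subst hμ
  set z : Fin d := ⟨0, by omega⟩
  set c := 1 + η * σ ^ 2
  set q := 1 + η * m ^ 2 / c
  have hc : 0 < c := by positivity
  have ha_geom := eq_pow_mul_of_succ_eq_mul (u := a) (q := c + η * m ^ 2) fun t ht => by
    rw [ha, ha, hrec t ht, inner_smul_add_inner_smul, PiLp.norm_single, Real.norm_eq_abs, sq_abs]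
  have hb_geom := eq_pow_mul_of_succ_eq_mul (u := b) (q := c) fun t ht => by
    rw [hb, hb, hrec t ht, EuclideanSpace.sum_ne_sq_smul_add_smul_single,
      Real.sqrt_mul (by positivity), Real.sqrt_sq hc.le]
  have hr_geom (n : ℕ) : r (n + 1) = r 1 * q ^ n := by
    rw [hr, hr, ha_geom, hb_geom, mul_div_mul_comm, ← div_pow, mul_comm]
    congr 2
    simp only [q]
    field_simp
  refine ⟨fun t _ => hr_geom t, fun ε hε _ t ht hT => ?_⟩
  obtain ⟨n, rfl⟩ : ∃ n, t = n + 1 := ⟨t - 1, by omega⟩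
  have hr1 : 0 < r 1 := by rw [hr]; positivity
  have hbt : 0 < b (n + 1) := by rw [hb_geom]; positivity
  refine ⟨by rw [← ha, ha_geom]; positivity, ?_⟩
  rw [EuclideanSpace.real_norm_sq_mul_sq_eq_inner_single_sq_add _ z, ← ha,
    ← Real.sq_sqrt (sum_nonneg fun i _ => sq_nonneg _), ← hb]
  refine one_sub_le_sq_div_sq_add hbt hm hε.le ?_
  rw [← hr, hr_geom]
  refine le_mul_mul_pow_sq_of_half_log_div_log_le (by positivity) hε hr1
    (lt_add_of_pos_right 1 (by positivity)) ?_
  push_cast at hT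
  linarith
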